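/- arXiv:2509.13296 — 4 statements merged into one kernel-verified Lean document; each statement's English description precedes it below -/
import Mathlib

section
/- Let N ≥ 1, let b be a submodular integer-valued function on the subsets of {1,…,N}, and fix k ∈ {1,…,N}. Suppose integers a_j for j ∈ {1,…,N}\{k} satisfy ∑_{j∈A} a_j ≤ b_A for every subset A ⊆ {1,…,N}\{k}. Define a_k = b_{{1,…,N}} − b_{{1,…,N}\{k}}. Then the extended tuple satisfies ∑_{j∈A} a_j ≤ b_A for every subset A ⊆ {1,…,N}. -/
/-- Appending `a k = b univ - b (univ \ {k})` to a tuple satisfying the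
nonzero mixed volume inequalities on subsets avoiding `k` produces a tuple satisfying
them on all subsets. -/
theorem stmt0 (N : ℕ) (hN : 1 ≤ N) (b : Finset (Fin N) → ℤ)
    (hsub : ∀ S T : Finset (Fin N), b (S ∪ T) + b (S ∩ T) ≤ b S + b T)
    (k : Fin N) (a : Fin N → ℤ)
    (ha : ∀ A : Finset (Fin N), k ∉ A → ∑ j ∈ A, a j ≤ b A)
    (hak : a k = b Finset.univ - b (Finset.univ.erase k)) :
    ∀ A : Finset (Fin N), ∑ j ∈ A, a j ≤ b A := by
  intro A
  by_cases hk : k ∈ A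
  · have hsplit : ∑ j ∈ A, a j = ∑ j ∈ A.erase k, a j + a k := by
      rw [add_comm, Finset.add_sum_erase _ _ hk]
    have h1 : ∑ j ∈ A.erase k, a j ≤ b (A.erase k) :=
      ha _ (Finset.notMem_erase k A)
    have h2 := hsub (Finset.univ.erase k) A
    have hU : Finset.univ.erase k ∪ A = Finset.univ := by
      apply Finset.eq_univ_iff_forall.mpr
      intro x
      by_cases hx : x = k
      · exact Finset.mem_union_right _ (hx ▸ hk)
      · exact Finset.mem_union_left _ (Finset.mem_erase.mpr ⟨hx, Finset.mem_univ x⟩)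
    have hI : Finset.univ.erase k ∩ A = A.erase k := by
      ext x
      simp [Finset.mem_erase, and_comm]
    rw [hU, hI] at h2
    rw [hsplit, hak]
    omega
  · exact ha A hk
end

section
/- Let Q_1, …, Q_N be nonempty subsets of a finite-dimensional real vector space. For each subset A ⊆ {1,…,N} define b_A = dim vectorSpan(∑_{j∈A} Q_j), the dimension of the vector span of the Minkowski sum of the Q_j for j ∈ A (with b_∅ = 0, corresponding to the empty Minkowski sum {0}). Then b is monotone (R ⊆ S implies b_R ≤ b_S) and submodular (b_S + b_T ≥ b_{S∪T} + b_{S∩T} for all S, T ⊆ {1,…,N}). -/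
open Pointwise

lemma vectorSpan_add_eq {V : Type*} [AddCommGroup V] [Module ℝ V]
    {X Y : Set V} (hX : X.Nonempty) (hY : Y.Nonempty) :
    vectorSpan ℝ (X + Y) = vectorSpan ℝ X ⊔ vectorSpan ℝ Y := by
  apply le_antisymm
  · rw [vectorSpan_def, Submodule.span_le]
    rintro v ⟨a, ⟨x, hx, y, hy, rfl⟩, b, ⟨x', hx', y', hy', rfl⟩, rfl⟩
    show (x + y) -ᵥ (x' + y') ∈ _
    have h : (x + y) -ᵥ (x' + y') = (x - x') + (y - y') := by
      rw [vsub_eq_sub]; abel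
    rw [h]
    exact Submodule.add_mem _
      (Submodule.mem_sup_left (vsub_mem_vectorSpan ℝ hx hx'))
      (Submodule.mem_sup_right (vsub_mem_vectorSpan ℝ hy hy'))
  · apply sup_le
    · obtain ⟨y, hy⟩ := hY
      have h : X + {y} ⊆ X + Y := Set.add_subset_add_left (by simpa using hy)
      refine le_trans ?_ (vectorSpan_mono ℝ h)
      rw [vectorSpan_def, vectorSpan_def, Submodule.span_le]
      rintro v ⟨a, ha, b, hb, rfl⟩
      apply Submodule.subset_span
      refine ⟨a + y, ⟨a, ha, y, rfl, rfl⟩, b + y, ⟨b, hb, y, rfl, rfl⟩, ?_⟩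
      show (a + y) -ᵥ (b + y) = a -ᵥ b
      rw [vsub_eq_sub, vsub_eq_sub]; abel
    · obtain ⟨x, hx⟩ := hX
      have h : {x} + Y ⊆ X + Y := Set.add_subset_add_right (by simpa using hx)
      refine le_trans ?_ (vectorSpan_mono ℝ h)
      rw [vectorSpan_def, vectorSpan_def, Submodule.span_le]
      rintro v ⟨a, ha, b, hb, rfl⟩
      apply Submodule.subset_span
      refine ⟨x + a, ⟨x, rfl, a, ha, rfl⟩, x + b, ⟨x, rfl, b, hb, rfl⟩, ?_⟩
      show (x + a) -ᵥ (x + b) = a -ᵥ b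
      rw [vsub_eq_sub, vsub_eq_sub]; abel

lemma sum_sets_nonempty {V : Type*} [AddCommGroup V]
    {N : ℕ} (Q : Fin N → Set V) (hQ : ∀ j, (Q j).Nonempty) (A : Finset (Fin N)) :
    (∑ j ∈ A, Q j).Nonempty := by
  induction A using Finset.induction with
  | empty => exact ⟨0, by simp [Set.mem_zero]⟩
  | @insert a s hj ih => rw [Finset.sum_insert hj]; exact (hQ a).add ih

lemma vectorSpan_sum_eq {V : Type*} [AddCommGroup V] [Module ℝ V]
    {N : ℕ} (Q : Fin N → Set V) (hQ : ∀ j, (Q j).Nonempty) (A : Finset (Fin N)) :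
    vectorSpan ℝ (∑ j ∈ A, Q j) = ⨆ j ∈ A, vectorSpan ℝ (Q j) := by
  induction A using Finset.induction with
  | empty =>
    rw [Finset.sum_empty, show (0 : Set V) = {0} from rfl, vectorSpan_singleton]
    simp
  | @insert a s hj ih =>
    rw [Finset.sum_insert hj, vectorSpan_add_eq (hQ a) (sum_sets_nonempty Q hQ s), ih, Finset.iSup_insert]

/-- For nonempty subsets `Q 1, …, Q N` of a finite-dimensional real vector
space, the function `b A = dim vectorSpan (∑ j ∈ A, Q j)` on subsets of `{1,…,N}` is
monotone and submodular. -/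
theorem stmt7 {V : Type*} [AddCommGroup V] [Module ℝ V] [FiniteDimensional ℝ V]
    (N : ℕ) (Q : Fin N → Set V) (hQ : ∀ j, (Q j).Nonempty)
    (b : Finset (Fin N) → ℕ)
    (hb : ∀ A : Finset (Fin N), b A = Module.finrank ℝ (vectorSpan ℝ (∑ j ∈ A, Q j))) :
    (∀ R S : Finset (Fin N), R ⊆ S → b R ≤ b S) ∧
    (∀ S T : Finset (Fin N), b (S ∪ T) + b (S ∩ T) ≤ b S + b T) := by
  have key : ∀ A, b A = Module.finrank ℝ (⨆ j ∈ A, vectorSpan ℝ (Q j) : Submodule ℝ V) := by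
    intro A; rw [hb A, vectorSpan_sum_eq Q hQ]
  constructor
  · intro R S hRS
    rw [key, key]
    exact Submodule.finrank_mono (biSup_mono hRS)
  · intro S T
    rw [key, key, key, key]
    have h1 : (⨆ j ∈ S ∪ T, vectorSpan ℝ (Q j)) =
        (⨆ j ∈ S, vectorSpan ℝ (Q j)) ⊔ ⨆ j ∈ T, vectorSpan ℝ (Q j) := Finset.iSup_union
    have h2 : (⨆ j ∈ S ∩ T, vectorSpan ℝ (Q j)) ≤
        (⨆ j ∈ S, vectorSpan ℝ (Q j)) ⊓ ⨆ j ∈ T, vectorSpan ℝ (Q j) :=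
      le_inf (biSup_mono fun _ => Finset.mem_of_mem_inter_left)
        (biSup_mono fun _ => Finset.mem_of_mem_inter_right)
    calc Module.finrank ℝ (⨆ j ∈ S ∪ T, vectorSpan ℝ (Q j) : Submodule ℝ V)
          + Module.finrank ℝ (⨆ j ∈ S ∩ T, vectorSpan ℝ (Q j) : Submodule ℝ V)
        ≤ Module.finrank ℝ ((⨆ j ∈ S, vectorSpan ℝ (Q j)) ⊔ ⨆ j ∈ T, vectorSpan ℝ (Q j) : Submodule ℝ V)
          + Module.finrank ℝ ((⨆ j ∈ S, vectorSpan ℝ (Q j)) ⊓ ⨆ j ∈ T, vectorSpan ℝ (Q j) : Submodule ℝ V) :=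
          add_le_add (Submodule.finrank_mono h1.le) (Submodule.finrank_mono h2)
      _ = _ := Submodule.finrank_sup_add_finrank_inf_eq _ _
end

section
/- Let b be an integer-valued function on the subsets of {1,2,3} with b_∅ = 0 that is submodular and monotone and satisfies b_A ≥ |A| for all A. Assume b_{{1,2,3}} is odd and b_{{1,2,3}} − b_{{1,2,3}\{ℓ}} is even for every ℓ ∈ {1,2,3}. Fix a permutation σ of {1,2,3} and suppose b_{{σ(1)}} is even. Define a_{σ(1)} = b_{{σ(1)}} − 1, a_{σ(2)} = b_{{σ(1),σ(2)}} − b_{{σ(1)}}, and a_{σ(3)} = b_{{1,2,3}} − b_{{σ(1),σ(2)}} + 1. Then each a_j is odd, a_1 + a_2 + a_3 = b_{{1,2,3}}, and ∑_{j∈A} a_j ≤ b_A holds for every subset A ⊆ {1,2,3} if and only if both b_{{1,2,3}} − b_{{σ(2),σ(3)}} ≤ b_{{σ(1)}} − 1 and b_{{1,2,3}} − b_{{σ(1),σ(2)}} ≤ b_{{σ(3)}} − 1. -/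
lemma tri3 (σ : Equiv.Perm (Fin 3)) (i : Fin 3) : i = σ 0 ∨ i = σ 1 ∨ i = σ 2 := by
  obtain ⟨k, hk⟩ : ∃ k, σ k = i := ⟨σ.symm i, σ.apply_symm_apply i⟩
  fin_cases k
  · exact Or.inl hk.symm
  · exact Or.inr (Or.inl hk.symm)
  · exact Or.inr (Or.inr hk.symm)

/-- The `N = 3` case of the odd tuple algorithm when `b {σ 0}` is even:
the produced tuple is odd, sums to `b univ`, and satisfies the nonzero mixed volume
inequalities iff two specializations of the submodularity inequality are strict. -/
theorem stmt8 (b : Finset (Fin 3) → ℤ) (hb0 : b ∅ = 0)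
    (hsub : ∀ S T : Finset (Fin 3), b (S ∪ T) + b (S ∩ T) ≤ b S + b T)
    (hmono : ∀ R S : Finset (Fin 3), R ⊆ S → b R ≤ b S)
    (hcard : ∀ A : Finset (Fin 3), (A.card : ℤ) ≤ b A)
    (hodd : Odd (b Finset.univ))
    (heven : ∀ ℓ : Fin 3, Even (b Finset.univ - b (Finset.univ.erase ℓ)))
    (σ : Equiv.Perm (Fin 3))
    (hσ0even : Even (b {σ 0}))
    (a : Fin 3 → ℤ)
    (ha0 : a (σ 0) = b {σ 0} - 1)
    (ha1 : a (σ 1) = b {σ 0, σ 1} - b {σ 0})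
    (ha2 : a (σ 2) = b Finset.univ - b {σ 0, σ 1} + 1) :
    (∀ j, Odd (a j)) ∧ (∑ j, a j = b Finset.univ) ∧
    ((∀ A : Finset (Fin 3), ∑ j ∈ A, a j ≤ b A) ↔
      (b Finset.univ - b {σ 1, σ 2} ≤ b {σ 0} - 1 ∧
        b Finset.univ - b {σ 0, σ 1} ≤ b {σ 2} - 1)) := by
  have h01 : σ 0 ≠ σ 1 := σ.injective.ne (by decide)
  have h02 : σ 0 ≠ σ 2 := σ.injective.ne (by decide)
  have h12 : σ 1 ≠ σ 2 := σ.injective.ne (by decide)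
  have huniv : (Finset.univ : Finset (Fin 3)) = {σ 0, σ 1, σ 2} := by
    ext i
    rcases tri3 σ i with h | h | h <;> subst h <;> simp
  have herase : Finset.univ.erase (σ 2) = ({σ 0, σ 1} : Finset (Fin 3)) := by
    ext i
    rcases tri3 σ i with h | h | h <;> subst h <;>
      simp [h01, h02, h12, h01.symm, h02.symm, h12.symm]
  have e2 := heven (σ 2)
  rw [herase] at e2
  have s01 : ∑ j ∈ ({σ 0, σ 1} : Finset (Fin 3)), a j = a (σ 0) + a (σ 1) := by
    rw [Finset.sum_insert (by simp [h01]), Finset.sum_singleton]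
  have s02 : ∑ j ∈ ({σ 0, σ 2} : Finset (Fin 3)), a j = a (σ 0) + a (σ 2) := by
    rw [Finset.sum_insert (by simp [h02]), Finset.sum_singleton]
  have s12 : ∑ j ∈ ({σ 1, σ 2} : Finset (Fin 3)), a j = a (σ 1) + a (σ 2) := by
    rw [Finset.sum_insert (by simp [h12]), Finset.sum_singleton]
  have ssum : ∑ j, a j = a (σ 0) + a (σ 1) + a (σ 2) := by
    rw [show (Finset.univ : Finset (Fin 3)) = {σ 0, σ 1, σ 2} from huniv,
      Finset.sum_insert (by simp [h01, h02]), Finset.sum_insert (by simp [h12]),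
      Finset.sum_singleton]
    ring
  -- submodularity specializations
  have u1 : ({σ 0} ∪ {σ 1} : Finset (Fin 3)) = {σ 0, σ 1} := by
    rfl
  have i1 : ({σ 0} ∩ {σ 1} : Finset (Fin 3)) = ∅ := by
    simp [Finset.singleton_inter_of_notMem, h01]
  have f1 := hsub {σ 0} {σ 1}
  rw [u1, i1, hb0] at f1
  have u2 : ({σ 0, σ 1} ∪ {σ 0, σ 2} : Finset (Fin 3)) = Finset.univ := by
    rw [huniv]
    ext i
    rcases tri3 σ i with h | h | h <;> subst h <;> simp
  have i2 : ({σ 0, σ 1} ∩ {σ 0, σ 2} : Finset (Fin 3)) = {σ 0} := by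
    ext i
    rcases tri3 σ i with h | h | h <;> subst h <;>
      simp [h01, h02, h12, h01.symm, h02.symm, h12.symm]
  have f2 := hsub {σ 0, σ 1} {σ 0, σ 2}
  rw [u2, i2] at f2
  refine ⟨?_, ?_, ?_⟩
  · intro j
    rcases tri3 σ j with h | h | h <;> subst h
    · rw [ha0]; exact hσ0even.sub_odd odd_one
    · rw [ha1, show b {σ 0, σ 1} - b {σ 0}
        = (b Finset.univ - b {σ 0}) - (b Finset.univ - b {σ 0, σ 1}) by ring]
      exact (hodd.sub_even hσ0even).sub_even e2
    · rw [ha2]; exact e2.add_odd odd_one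
  · rw [ssum, ha0, ha1, ha2]; ring
  · constructor
    · intro h
      have H1 := h {σ 1, σ 2}
      rw [s12, ha1, ha2] at H1
      have H2 := h {σ 2}
      rw [Finset.sum_singleton, ha2] at H2
      exact ⟨by linarith, by linarith⟩
    · rintro ⟨H1, H2⟩ A
      by_cases m0 : σ 0 ∈ A <;> by_cases m1 : σ 1 ∈ A <;> by_cases m2 : σ 2 ∈ A
      · have hA : A = Finset.univ := by
          rw [huniv]; ext i
          rcases tri3 σ i with h | h | h <;> subst h <;> simp [m0, m1, m2]
        rw [hA]
        rw [show ∑ j ∈ Finset.univ, a j = ∑ j, a j from rfl, ssum, ha0, ha1, ha2]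
        linarith
      · have hA : A = {σ 0, σ 1} := by
          ext i
          rcases tri3 σ i with h | h | h <;> subst h <;>
            simp [m0, m1, m2, h01, h02, h12, h01.symm, h02.symm, h12.symm]
        rw [hA, s01, ha0, ha1]; linarith
      · have hA : A = {σ 0, σ 2} := by
          ext i
          rcases tri3 σ i with h | h | h <;> subst h <;>
            simp [m0, m1, m2, h01, h02, h12, h01.symm, h02.symm, h12.symm]
        rw [hA, s02, ha0, ha2]; linarith
      · have hA : A = {σ 0} := by
          ext i
          rcases tri3 σ i with h | h | h <;> subst h <;>
            simp [m0, m1, m2, h01, h02, h12, h01.symm, h02.symm, h12.symm]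
        rw [hA, Finset.sum_singleton, ha0]; linarith
      · have hA : A = {σ 1, σ 2} := by
          ext i
          rcases tri3 σ i with h | h | h <;> subst h <;>
            simp [m0, m1, m2, h01, h02, h12, h01.symm, h02.symm, h12.symm]
        rw [hA, s12, ha1, ha2]; linarith
      · have hA : A = {σ 1} := by
          ext i
          rcases tri3 σ i with h | h | h <;> subst h <;>
            simp [m0, m1, m2, h01, h02, h12, h01.symm, h02.symm, h12.symm]
        rw [hA, Finset.sum_singleton, ha1]; linarith
      · have hA : A = {σ 2} := by
          ext i
          rcases tri3 σ i with h | h | h <;> subst h <;>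
            simp [m0, m1, m2, h01, h02, h12, h01.symm, h02.symm, h12.symm]
        rw [hA, Finset.sum_singleton, ha2]; linarith
      · have hA : A = ∅ := by
          ext i
          rcases tri3 σ i with h | h | h <;> subst h <;>
            simp [m0, m1, m2]
        rw [hA, Finset.sum_empty, hb0]
end

section
/- Let b be an integer-valued function on the subsets of {1,2,3} with b_∅ = 0 that is submodular and monotone and satisfies b_A ≥ |A| for all A. Assume b_{{1,2,3}} is odd and b_{{1,2,3}} − b_{{1,2,3}\{ℓ}} is even for every ℓ ∈ {1,2,3}. Fix a permutation σ of {1,2,3} and suppose b_{{σ(1)}} is odd. Define a_{σ(1)} = b_{{σ(1)}}, a_{σ(2)} = b_{{σ(1),σ(2)}} − b_{{σ(1)}} − 1, and a_{σ(3)} = b_{{1,2,3}} − b_{{σ(1),σ(2)}} + 1. Then each a_j is odd, a_1 + a_2 + a_3 = b_{{1,2,3}}, and ∑_{j∈A} a_j ≤ b_A holds for every subset A ⊆ {1,2,3} if and only if both b_{{1,2,3}} − b_{{σ(2),σ(3)}} ≤ b_{{σ(1)}} − 1 and b_{{1,2,3}} − b_{{σ(1),σ(2)}} ≤ b_{{σ(1),σ(3)}}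 − b_{{σ(1)}} − 1. -/
private lemma setfact1 : ∀ i j k : Fin 3, i ≠ j → i ≠ k → j ≠ k →
    Finset.univ.erase i = ({j, k} : Finset (Fin 3)) := by decide

private lemma setfact2 : ∀ i j k : Fin 3, i ≠ j → i ≠ k → j ≠ k →
    ({i, j, k} : Finset (Fin 3)) = Finset.univ := by decide

private lemma aux (b : Finset (Fin 3) → ℤ) (hb0 : b ∅ = 0)
    (hsub : ∀ S T : Finset (Fin 3), b (S ∪ T) + b (S ∩ T) ≤ b S + b T)
    (i j k : Fin 3) (hij : i ≠ j) (hik : i ≠ k) (hjk : j ≠ k)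
    (hodd : Odd (b Finset.univ)) (hoi : Odd (b {i}))
    (hek : Even (b Finset.univ - b {i, j}))
    (hei : Even (b Finset.univ - b {j, k}))
    (a : Fin 3 → ℤ)
    (ha0 : a i = b {i})
    (ha1 : a j = b {i, j} - b {i} - 1)
    (ha2 : a k = b Finset.univ - b {i, j} + 1) :
    (∀ j, Odd (a j)) ∧ (∑ j, a j = b Finset.univ) ∧
    ((∀ A : Finset (Fin 3), ∑ j ∈ A, a j ≤ b A) ↔
      (b Finset.univ - b {j, k} ≤ b {i} - 1 ∧
        b Finset.univ - b {i, j} ≤ b {i, k} - b {i} - 1)) := by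
  obtain ⟨m, hm⟩ := hodd
  obtain ⟨n, hn⟩ := hoi
  obtain ⟨p, hp⟩ := hek
  obtain ⟨q, hq⟩ := hei
  have hmem : ∀ x : Fin 3, x = i ∨ x = j ∨ x = k := by
    intro x
    have hx : x ∈ (Finset.univ : Finset (Fin 3)) := Finset.mem_univ x
    rw [← setfact2 i j k hij hik hjk] at hx
    simpa using hx
  have s1 : b {i, j} + b ∅ ≤ b {i} + b {j} := by
    have h := hsub {i} {j}
    rwa [show ({i} ∪ {j} : Finset (Fin 3)) = {i, j} by ext x; simp,
      show ({i} ∩ {j} : Finset (Fin 3)) = ∅ by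
        ext x; simp only [Finset.mem_inter, Finset.mem_singleton,
          Finset.notMem_empty, iff_false]; rintro ⟨rfl, rfl⟩; exact hij rfl] at h
  have s2 : b {i, k} + b ∅ ≤ b {i} + b {k} := by
    have h := hsub {i} {k}
    rwa [show ({i} ∪ {k} : Finset (Fin 3)) = {i, k} by ext x; simp,
      show ({i} ∩ {k} : Finset (Fin 3)) = ∅ by
        ext x; simp only [Finset.mem_inter, Finset.mem_singleton,
          Finset.notMem_empty, iff_false]; rintro ⟨rfl, rfl⟩; exact hik rfl] at h
  have hjmem : j ∉ ({k} : Finset (Fin 3)) := by simp [hjk]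
  have himem : i ∉ ({j, k} : Finset (Fin 3)) := by simp [hij, hik]
  have hsum3 : ∑ x, a x = a i + a j + a k := by
    rw [← setfact2 i j k hij hik hjk, Finset.sum_insert himem,
      Finset.sum_insert hjmem, Finset.sum_singleton]
    ring
  refine ⟨?_, by rw [hsum3]; omega, ?_, ?_⟩
  · intro x
    rcases hmem x with rfl | rfl | rfl <;> rw [Int.odd_iff] <;> omega
  · intro h
    have h1 := h {j, k}
    have h2 := h {i, k}
    rw [Finset.sum_pair hjk] at h1
    rw [Finset.sum_pair hik] at h2
    omega
  · rintro ⟨h1, h2⟩ A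
    by_cases hi : i ∈ A <;> by_cases hj : j ∈ A <;> by_cases hk : k ∈ A
    · have hA : A = Finset.univ := by
        rw [← setfact2 i j k hij hik hjk]
        ext x
        simp only [Finset.mem_insert, Finset.mem_singleton]
        constructor
        · intro _; exact hmem x
        · rintro (rfl | rfl | rfl) <;> assumption
      rw [hA, hsum3]
      omega
    · have hA : A = {i, j} := by
        ext x
        simp only [Finset.mem_insert, Finset.mem_singleton]
        constructor
        · intro hxA; rcases hmem x with rfl | rfl | rfl <;> tauto
        · rintro (rfl | rfl) <;> assumption
      rw [hA, Finset.sum_pair hij]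
      omega
    · have hA : A = {i, k} := by
        ext x
        simp only [Finset.mem_insert, Finset.mem_singleton]
        constructor
        · intro hxA; rcases hmem x with rfl | rfl | rfl <;> tauto
        · rintro (rfl | rfl) <;> assumption
      rw [hA, Finset.sum_pair hik]
      omega
    · have hA : A = {i} := by
        ext x
        simp only [Finset.mem_singleton]
        constructor
        · intro hxA; rcases hmem x with rfl | rfl | rfl <;> tauto
        · rintro rfl; assumption
      rw [hA, Finset.sum_singleton]
      omega
    · have hA : A = {j, k} := by
        ext x
        simp only [Finset.mem_insert, Finset.mem_singleton]
        constructor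
        · intro hxA; rcases hmem x with rfl | rfl | rfl <;> tauto
        · rintro (rfl | rfl) <;> assumption
      rw [hA, Finset.sum_pair hjk]
      omega
    · have hA : A = {j} := by
        ext x
        simp only [Finset.mem_singleton]
        constructor
        · intro hxA; rcases hmem x with rfl | rfl | rfl <;> tauto
        · rintro rfl; assumption
      rw [hA, Finset.sum_singleton]
      omega
    · have hA : A = {k} := by
        ext x
        simp only [Finset.mem_singleton]
        constructor
        · intro hxA; rcases hmem x with rfl | rfl | rfl <;> tauto
        · rintro rfl; assumption
      rw [hA, Finset.sum_singleton]
      omega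
    · have hA : A = ∅ := by
        ext x
        simp only [Finset.notMem_empty, iff_false]
        intro hxA; rcases hmem x with rfl | rfl | rfl <;> tauto
      rw [hA, Finset.sum_empty]
      omega

/-- The `N = 3` case of the odd tuple algorithm when `b {σ 0}` is odd:
the produced tuple is odd, sums to `b univ`, and satisfies the nonzero mixed volume
inequalities iff two specializations of the submodularity inequality are strict. -/
theorem stmt9 (b : Finset (Fin 3) → ℤ) (hb0 : b ∅ = 0)
    (hsub : ∀ S T : Finset (Fin 3), b (S ∪ T) + b (S ∩ T) ≤ b S + b T)
    (hmono : ∀ R S : Finset (Fin 3), R ⊆ S → b R ≤ b S)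
    (hcard : ∀ A : Finset (Fin 3), (A.card : ℤ) ≤ b A)
    (hodd : Odd (b Finset.univ))
    (heven : ∀ ℓ : Fin 3, Even (b Finset.univ - b (Finset.univ.erase ℓ)))
    (σ : Equiv.Perm (Fin 3))
    (hσ0odd : Odd (b {σ 0}))
    (a : Fin 3 → ℤ)
    (ha0 : a (σ 0) = b {σ 0})
    (ha1 : a (σ 1) = b {σ 0, σ 1} - b {σ 0} - 1)
    (ha2 : a (σ 2) = b Finset.univ - b {σ 0, σ 1} + 1) :
    (∀ j, Odd (a j)) ∧ (∑ j, a j = b Finset.univ) ∧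
    ((∀ A : Finset (Fin 3), ∑ j ∈ A, a j ≤ b A) ↔
      (b Finset.univ - b {σ 1, σ 2} ≤ b {σ 0} - 1 ∧
        b Finset.univ - b {σ 0, σ 1} ≤ b {σ 0, σ 2} - b {σ 0} - 1)) := by
  have h01 : σ 0 ≠ σ 1 := fun h => by simpa using σ.injective h
  have h02 : σ 0 ≠ σ 2 := fun h => by simpa using σ.injective h
  have h12 : σ 1 ≠ σ 2 := fun h => by simpa using σ.injective h
  have hek : Even (b Finset.univ - b {σ 0, σ 1}) := by
    have := heven (σ 2)
    rwa [setfact1 (σ 2) (σ 0) (σ 1) (Ne.symm h02) (Ne.symm h12) h01] at this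
  have hei : Even (b Finset.univ - b {σ 1, σ 2}) := by
    have := heven (σ 0)
    rwa [setfact1 (σ 0) (σ 1) (σ 2) h01 h02 h12] at this
  exact aux b hb0 hsub (σ 0) (σ 1) (σ 2) h01 h02 h12 hodd hσ0odd hek hei a ha0 ha1 ha2
end
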